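/- Let X be a simplicial set and let c be a k-sphere in X (k ≥ 1) whose faces c_0, …, c_k all have degeneracy at least 2. Let r be the minimal value of dgn(c_i) over 0 ≤ i ≤ k and let m be the smallest ordinal with dgn(c_m) = r. If m reduces c_{m+1} and dgn(c_{m+1}) = r, then c_m = c_{m+1}. -/

import Mathlib

/-! If `i` reduces `x`, then in a representation `x = y ε` of least dimension the vertex `i` is
collapsed by `ε` with a neighbour (otherwise the face `x δᵢ` would be at least as degenerate as
`x`), so `x = (x δᵢ) σₚ` with `p ∈ {i - 1, i}`. The cycle equation `c_{m+1} δ_m = c_m δ_m` shows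
that `m` reduces `c_m` as well. If both `c_m` and `c_{m+1}` are degeneracies along `σ_m`, they are
both `(c_m δ_m) σ_m`. In every other case a cycle equation makes `c_m δ_m` a face of `c_{m-1}`,
which then has degeneracy at most `dgn c_m`, against the choice of `m`. -/

open CategoryTheory Simplicial

namespace AufhebungSSet

/-- An `n`-simplex `x` of a simplicial set `X` is degenerate if it is the image of a
simplex of strictly smaller dimension under the action of an epimorphism of `Δ`. -/
def IsDegen (X : SSet) {n : ℕ} (x : X _⦋n⦌) : Prop :=
  ∃ m : ℕ, m < n ∧ ∃ ε : (⦋n⦌ : SimplexCategory) ⟶ ⦋m⦌,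
    Function.Surjective ε.toOrderHom ∧ ∃ y : X _⦋m⦌, x = X.map ε.op y

/-- The degeneracy `dgn x = n - k`, where `k` is the least dimension from which `x`
is the image of a simplex under the action of an epimorphism; by the Eilenberg–Zilber
lemma this is the dimension of the nondegenerate simplex of which `x` is a degeneracy. -/
noncomputable def dgn (X : SSet) {n : ℕ} (x : X _⦋n⦌) : ℕ :=
  n - sInf {k | ∃ ε : (⦋n⦌ : SimplexCategory) ⟶ ⦋k⦌,
    Function.Surjective ε.toOrderHom ∧ ∃ y : X _⦋k⦌, x = X.map ε.op y}

/-- `i` reduces `x` when `dgn (x δᵢ) = dgn x - 1`. -/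
def Reduces (X : SSet) {n : ℕ} (i : Fin (n + 2)) (x : X _⦋n + 1⦌) : Prop :=
  dgn X (X.map (SimplexCategory.δ i).op x) + 1 = dgn X x

/-- `i` properly reduces `x` when `x = x δᵢ σᵢ`. -/
def ProperlyReduces (X : SSet) {n : ℕ} (i : Fin (n + 1)) (x : X _⦋n + 1⦌) : Prop :=
  x = X.map (SimplexCategory.σ i).op (X.map (SimplexCategory.δ i.castSucc).op x)

/-- A `(K+2)`-sphere: a family `c₀, …, c_{K+2}` of `(K+1)`-simplices satisfying the
cycle equations `cⱼ δᵢ = cᵢ δ_{j-1}` for `i < j` (here reindexed: `c_{j+1} δᵢ = cᵢ δⱼ`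
for `i ≤ j`). -/
def IsSphere (X : SSet) {K : ℕ} (c : Fin (K + 3) → X _⦋K + 1⦌) : Prop :=
  ∀ i j : Fin (K + 2), i ≤ j →
    X.map (SimplexCategory.δ i).op (c j.succ) = X.map (SimplexCategory.δ j).op (c i.castSucc)

/-- `y` fills the sphere `c` when `y δᵢ = cᵢ` for all `i`. -/
def IsFiller (X : SSet) {K : ℕ} (y : X _⦋K + 2⦌) (c : Fin (K + 3) → X _⦋K + 1⦌) : Prop :=
  ∀ i : Fin (K + 3), X.map (SimplexCategory.δ i).op y = c i

open SimplexCategory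

def epiDims (X : SSet) {n : ℕ} (x : X _⦋n⦌) : Set ℕ :=
  {k | ∃ ε : (⦋n⦌ : SimplexCategory) ⟶ ⦋k⦌,
    Function.Surjective ε.toOrderHom ∧ ∃ y : X _⦋k⦌, x = X.map ε.op y}

lemma self_mem_epiDims (X : SSet) {n : ℕ} (x : X _⦋n⦌) : n ∈ epiDims X x :=
  ⟨𝟙 _, fun v => ⟨v, rfl⟩, x, by simp⟩

lemma sInf_epiDims_mem (X : SSet) {n : ℕ} (x : X _⦋n⦌) : sInf (epiDims X x) ∈ epiDims X x :=
  Nat.sInf_mem ⟨n, self_mem_epiDims X x⟩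

lemma sInf_epiDims_le (X : SSet) {n : ℕ} (x : X _⦋n⦌) : sInf (epiDims X x) ≤ n :=
  Nat.sInf_le (self_mem_epiDims X x)

lemma sInf_epiDims_le_of_eq_map (X : SSet) {n k : ℕ} (x : X _⦋n⦌)
    (f : (⦋n⦌ : SimplexCategory) ⟶ ⦋k⦌) (y : X _⦋k⦌) (hx : x = X.map f.op y) :
    sInf (epiDims X x) ≤ k := by
  have hmem : (Limits.image f).len ∈ epiDims X x :=
    ⟨Limits.factorThruImage f, epi_iff_surjective.mp inferInstance,
      X.map (Limits.image.ι f).op y, by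
        rw [hx, ← Functor.map_comp_apply, ← op_comp, Limits.image.fac]⟩
  exact (Nat.sInf_le hmem).trans (len_le_of_mono (Limits.image.ι f))

lemma dgn_le_dgn_map_δ_add_one (X : SSet) {n : ℕ} (i : Fin (n + 2)) (x : X _⦋n + 1⦌) :
    dgn X x ≤ dgn X (X.map (δ i).op x) + 1 := by
  obtain ⟨ε, -, y, hy⟩ := sInf_epiDims_mem X x
  have hface := sInf_epiDims_le_of_eq_map X (X.map (δ i).op x) (δ i ≫ ε) y
    (by rw [op_comp, Functor.map_comp_apply]; exact congrArg _ hy)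
  have := sInf_epiDims_le X (X.map (δ i).op x)
  change n + 1 - sInf (epiDims X x) ≤ n - sInf (epiDims X (X.map (δ i).op x)) + 1
  omega

lemma sInf_epiDims_map_δ_le_of_not_surjective (X : SSet) {n s : ℕ} (i : Fin (n + 2))
    (x : X _⦋n + 1⦌) (ε : (⦋n + 1⦌ : SimplexCategory) ⟶ ⦋s + 1⦌) (y : X _⦋s + 1⦌)
    (hy : x = X.map ε.op y) (hε : ¬ Function.Surjective (δ i ≫ ε).toOrderHom) :
    sInf (epiDims X (X.map (δ i).op x)) ≤ s := by
  obtain ⟨a, θ, hθ⟩ := eq_comp_δ_of_not_surjective _ hε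
  refine sInf_epiDims_le_of_eq_map X _ θ (X.map (δ a).op y) ?_
  rw [hy, ← Functor.map_comp_apply, ← op_comp, hθ, op_comp, Functor.map_comp_apply]

lemma Reduces.surjective_δ_comp {X : SSet} {n s : ℕ} {i : Fin (n + 2)} {x : X _⦋n + 1⦌}
    (hi : Reduces X i x) (hs : sInf (epiDims X x) = s)
    (ε : (⦋n + 1⦌ : SimplexCategory) ⟶ ⦋s⦌) (y : X _⦋s⦌) (hy : x = X.map ε.op y) :
    Function.Surjective (δ i ≫ ε).toOrderHom := by
  by_contra hε
  cases s with
  | zero => exact hε fun v => ⟨0, Subsingleton.elim (α := Fin 1) _ _⟩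
  | succ t =>
    have hface := sInf_epiDims_map_δ_le_of_not_surjective X i x ε y hy hε
    have := sInf_epiDims_le X x
    change n - sInf (epiDims X (X.map (δ i).op x)) + 1 = n + 1 - sInf (epiDims X x) at hi
    omega

lemma Monotone.exists_adjacent_eq {α : Type*} [PartialOrder α] {n : ℕ} {f : Fin (n + 2) → α}
    (hf : Monotone f) {i j : Fin (n + 2)} (hji : j ≠ i) (h : f j = f i) :
    ∃ p : Fin (n + 1), (p.castSucc = i ∨ p.succ = i) ∧ f p.castSucc = f p.succ := by
  rcases hji.lt_or_gt with hlt | hgt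
  · obtain ⟨p, rfl⟩ := Fin.exists_succ_eq.mpr (Fin.pos_of_ne_zero hlt.ne_bot).ne'
    have hj : j ≤ p.castSucc := Fin.le_castSucc_iff.mpr hlt
    exact ⟨p, Or.inr rfl, le_antisymm (hf (Fin.castSucc_le_succ p)) (h ▸ hf hj)⟩
  · obtain ⟨p, rfl⟩ := Fin.exists_castSucc_eq.mpr (Fin.ne_last_of_lt hgt)
    have hj : p.succ ≤ j := Fin.castSucc_lt_iff_succ_le.mp hgt
    exact ⟨p, Or.inl rfl, le_antisymm (hf (Fin.castSucc_le_succ p)) (h ▸ hf hj)⟩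

lemma eq_σ_comp_δ_comp {n : ℕ} {Δ : SimplexCategory} (ε : ⦋n + 1⦌ ⟶ Δ) (p : Fin (n + 1))
    (hp : ε.toOrderHom p.castSucc = ε.toOrderHom p.succ) {i : Fin (n + 2)}
    (hi : p.castSucc = i ∨ p.succ = i) : ε = σ p ≫ δ i ≫ ε := by
  obtain ⟨θ, rfl⟩ := eq_σ_comp_of_not_injective' ε p hp
  rcases hi with rfl | rfl
  · rw [δ_comp_σ_self_assoc]
  · rw [δ_comp_σ_succ_assoc]

theorem Reduces.exists_eq_map_σ {X : SSet} {n : ℕ} {i : Fin (n + 2)} {x : X _⦋n + 1⦌}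
    (hi : Reduces X i x) :
    ∃ p : Fin (n + 1), (p.castSucc = i ∨ p.succ = i) ∧
      x = X.map (σ p).op (X.map (δ i).op x) := by
  obtain ⟨ε, -, y, hy⟩ := sInf_epiDims_mem X x
  obtain ⟨w, hw⟩ := hi.surjective_δ_comp rfl ε y hy (ε.toOrderHom i)
  obtain ⟨p, hpi, hp⟩ :=
    Monotone.exists_adjacent_eq ε.toOrderHom.monotone (j := i.succAbove w)
      (Fin.succAbove_ne i w) hw
  have hface : X.map (δ i).op x = X.map (δ i ≫ ε).op y := by
    rw [op_comp, Functor.map_comp_apply]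
    exact congrArg _ hy
  refine ⟨p, hpi, ?_⟩
  rw [hface, ← Functor.map_comp_apply, ← op_comp, ← eq_σ_comp_δ_comp ε p hp hpi]
  exact hy

theorem IsSphere.eq_of_reduces {X : SSet} {K : ℕ} {c : Fin (K + 3) → X _⦋K + 1⦌}
    (hc : IsSphere X c) (i : Fin (K + 2)) (hred : Reduces X i (c i.succ))
    (hdgn : dgn X (c i.succ) = dgn X (c i.castSucc))
    (hprev : ∀ u < i.castSucc, dgn X (c i.castSucc) < dgn X (c u)) :
    c i.castSucc = c i.succ := by
  have hface : X.map (δ i).op (c i.succ) = X.map (δ i).op (c i.castSucc) := hc i i le_rfl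
  have hred' : Reduces X i (c i.castSucc) := by
    rw [Reduces, ← hface, ← hdgn]
    exact hred
  have hnot : ∀ u < i.castSucc, ∀ j, X.map (δ j).op (c u) ≠ X.map (δ i).op (c i.castSucc) := by
    intro u hu j h
    have hu' := dgn_le_dgn_map_δ_add_one X j (c u)
    rw [h] at hu'
    have := hprev u hu
    rw [Reduces] at hred'
    omega
  obtain ⟨p, hp | rfl, hxp⟩ := hred.exists_eq_map_σ
  · obtain ⟨q, hq | rfl, hxq⟩ := hred'.exists_eq_map_σ
    · obtain rfl : p = q := Fin.castSucc_injective _ (hp.trans hq.symm)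
      rw [hxp, hface]
      exact hxq
    · refine absurd ?_ (hnot q.castSucc.castSucc ?_ q.castSucc)
      · rw [← hc q.castSucc q.castSucc le_rfl, Fin.succ_castSucc]
        conv_lhs => rw [hxq]
        exact X.δ_comp_σ_self_apply q _
      · exact Fin.castSucc_lt_castSucc_iff.mpr Fin.castSucc_lt_succ
  · refine absurd ?_ (hnot p.castSucc.castSucc ?_ p.succ)
    · rw [← hc p.castSucc p.succ (Fin.castSucc_le_succ p), ← hface]
      conv_lhs => rw [hxp]
      exact X.δ_comp_σ_self_apply p _
    · exact Fin.castSucc_lt_castSucc_iff.mpr Fin.castSucc_lt_succ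

/-- If all faces of a sphere `c` have degeneracy at least 2, `r` is the minimal
degeneracy, `m` is the first face of degeneracy `r`, `m` reduces `c_{m+1}`, and
`dgn (c_{m+1}) = r`, then `c_m = c_{m+1}`. -/
theorem mplus1_c (X : SSet) (K : ℕ) (c : Fin (K + 3) → X _⦋K + 1⦌) (hc : IsSphere X c)
    (r : ℕ) (hr : ∀ u : Fin (K + 3), r ≤ dgn X (c u))
    (m : Fin (K + 3)) (hm : dgn X (c m) = r)
    (hmmin : ∀ u : Fin (K + 3), dgn X (c u) = r → m ≤ u)
    (hm1 : (m : ℕ) + 1 < K + 3)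
    (hred : Reduces X ⟨(m : ℕ), by omega⟩ (c ⟨(m : ℕ) + 1, hm1⟩))
    (hdgn : dgn X (c ⟨(m : ℕ) + 1, hm1⟩) = r) :
    c m = c ⟨(m : ℕ) + 1, hm1⟩ := by
  refine hc.eq_of_reduces ⟨m, by omega⟩ hred (hdgn.trans hm.symm) fun u hu => ?_
  change dgn X (c m) < dgn X (c u)
  have hne : dgn X (c u) ≠ r := fun h => (hmmin u h).not_gt hu
  have := hr u
  omega

end AufhebungSSet
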